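/- arXiv:math/0612791 — 3 statements merged into one kernel-verified Lean document; each statement's English description precedes it below -/
import Mathlib

section
/- Let k be a positive integer and let Π₀, Π₁, Π be set partitions of {1,...,2k} with every part of size at least 2, where Π₀ and Π₁ are perfect matchings (every part of size exactly 2). If the join Π₀ ∨ Π₁ ∨ Π is the trivial partition with one part, then #(Π₀ ∨ Π) + #(Π₁ ∨ Π) ≤ 1 + #Π. -/
/-- Number of parts of a partition of `α`, encoded as a setoid. -/
noncomputable def numParts {α : Type*} (S : Setoid α) : ℕ := Nat.card (Quotient S)

/-- Cardinality of the part containing `x`. -/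
noncomputable def partCard {α : Type*} (S : Setoid α) (x : α) : ℕ :=
  Nat.card {y : α // S.r x y}

/-- Every part has cardinality at least 2, i.e. the partition is in `Part₂`. -/
def AllPartsTwoLe {α : Type*} (S : Setoid α) : Prop := ∀ x, 2 ≤ partCard S x

/-- A perfect matching: every part has cardinality exactly 2. -/
def IsPerfectMatching {α : Type*} (S : Setoid α) : Prop := ∀ x, partCard S x = 2

section Aux

variable {α : Type*}

/-- The setoid that identifies `a` with `b` and nothing else. -/
def pairS (a b : α) : Setoid α :=
  ⟨fun x y => x = y ∨ (x = a ∧ y = b) ∨ (x = b ∧ y = a), by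
    refine ⟨fun x => Or.inl rfl, ?_, ?_⟩
    · rintro x y (rfl | ⟨rfl, rfl⟩ | ⟨rfl, rfl⟩) <;> tauto
    · rintro x y z (rfl | ⟨rfl, rfl⟩ | ⟨rfl, rfl⟩) (rfl | ⟨h1, h2⟩ | ⟨h1, h2⟩) <;>
        subst_vars <;> tauto⟩

lemma pairS_rel (a b : α) : pairS a b a b := Or.inr (Or.inl ⟨rfl, rfl⟩)

lemma pairS_le {S : Setoid α} {a b : α} (h : S a b) : pairS a b ≤ S := by
  rintro x y (rfl | ⟨rfl, rfl⟩ | ⟨rfl, rfl⟩)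
  · exact S.refl x
  · exact h
  · exact S.symm h

/-- The relation of the join of `S` with a pair setoid. -/
lemma sup_pairS_rel {S : Setoid α} {a b x y : α} :
    (S ⊔ pairS a b) x y ↔ S x y ∨ (S x a ∧ S b y) ∨ (S x b ∧ S a y) := by
  constructor
  · intro h
    let R : Setoid α :=
      ⟨fun x y => S x y ∨ (S x a ∧ S b y) ∨ (S x b ∧ S a y), by
        refine ⟨fun x => Or.inl (S.refl x), ?_, ?_⟩
        · rintro x y (h | ⟨h1, h2⟩ | ⟨h1, h2⟩)
          · exact Or.inl (S.symm h)
          · exact Or.inr (Or.inr ⟨S.symm h2, S.symm h1⟩)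
          · exact Or.inr (Or.inl ⟨S.symm h2, S.symm h1⟩)
        · rintro x y z (h | ⟨h1, h2⟩ | ⟨h1, h2⟩) (h' | ⟨h1', h2'⟩ | ⟨h1', h2'⟩)
          · exact Or.inl (S.trans h h')
          · exact Or.inr (Or.inl ⟨S.trans h h1', h2'⟩)
          · exact Or.inr (Or.inr ⟨S.trans h h1', h2'⟩)
          · exact Or.inr (Or.inl ⟨h1, S.trans h2 h'⟩)
          · exact Or.inl (S.trans (S.trans h1 (S.symm (S.trans h2 h1'))) h2')
          · exact Or.inl (S.trans h1 h2')
          · exact Or.inr (Or.inr ⟨h1, S.trans h2 h'⟩)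
          · exact Or.inl (S.trans h1 h2')
          · exact Or.inl (S.trans h1 (S.trans (S.symm (S.trans h2 h1')) h2'))⟩
    have hle : S ⊔ pairS a b ≤ R := by
      refine sup_le ?_ ?_
      · intro x y hxy; exact Or.inl hxy
      · rintro x y (rfl | ⟨rfl, rfl⟩ | ⟨rfl, rfl⟩)
        · exact Or.inl (S.refl x)
        · exact Or.inr (Or.inl ⟨S.refl _, S.refl _⟩)
        · exact Or.inr (Or.inr ⟨S.refl _, S.refl _⟩)
    exact hle h
  · have hS : S ≤ S ⊔ pairS a b := le_sup_left
    have hp : pairS a b ≤ S ⊔ pairS a b := le_sup_right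
    rintro (h | ⟨h1, h2⟩ | ⟨h1, h2⟩)
    · exact hS h
    · exact (S ⊔ pairS a b).trans (hS h1)
        ((S ⊔ pairS a b).trans (hp (pairS_rel a b)) (hS h2))
    · exact (S ⊔ pairS a b).trans (hS h1)
        ((S ⊔ pairS a b).trans ((S ⊔ pairS a b).symm (hp (pairS_rel a b))) (hS h2))

lemma numParts_mono [Finite α] {S T : Setoid α} (h : S ≤ T) : numParts T ≤ numParts S := by
  refine Nat.card_le_card_of_surjective
    (Quotient.lift (fun x => Quotient.mk T x) (fun x y hxy => Quot.sound (h hxy))) ?_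
  intro q
  induction q using Quotient.ind with
  | _ x => exact ⟨Quotient.mk S x, rfl⟩

lemma numParts_le_sup_pairS_add_one [Finite α] (S : Setoid α) (a b : α) :
    numParts S ≤ numParts (S ⊔ pairS a b) + 1 := by
  classical
  set S' := S ⊔ pairS a b with hS'
  have hle : S ≤ S' := le_sup_left
  let f : Quotient S → Option (Quotient S') :=
    Quotient.lift
      (fun x => if S x b ∧ ¬ S x a then none else some (Quotient.mk S' x))
      (by
        intro x y hxy
        by_cases hx : S x b ∧ ¬ S x a
        · have hy : S y b ∧ ¬ S y a :=
            ⟨S.trans (S.symm hxy) hx.1, fun h => hx.2 (S.trans hxy h)⟩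
          simp [hx, hy]
        · have hy : ¬ (S y b ∧ ¬ S y a) := by
            intro hy
            exact hx ⟨S.trans hxy hy.1, fun h => hy.2 (S.trans (S.symm hxy) h)⟩
          simp only [hx, hy, if_false]
          exact congrArg some (Quot.sound (hle hxy)))
  have hinj : Function.Injective f := by
    intro q1 q2
    induction q1 using Quotient.ind with
    | _ x =>
    induction q2 using Quotient.ind with
    | _ y =>
    intro heq
    by_cases hx : S x b ∧ ¬ S x a <;> by_cases hy : S y b ∧ ¬ S y a
    · exact Quot.sound (S.trans hx.1 (S.symm hy.1))
    · simp [f, hx, hy] at heq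
    · simp [f, hx, hy] at heq
    · simp only [f, Quotient.lift_mk, hx, hy, if_false, Option.some.injEq] at heq
      have h' : S' x y := Quotient.exact heq
      rcases (sup_pairS_rel).mp h' with h | ⟨h1, h2⟩ | ⟨h1, h2⟩
      · exact Quot.sound h
      · -- S x a, S b y; from hy : ¬(S y b ∧ ¬ S y a) and S y b, get S y a
        have hyb : S y b := S.symm h2
        have hya : S y a := by
          by_contra hna
          exact hy ⟨hyb, hna⟩
        exact Quot.sound (S.trans h1 (S.symm hya))
      · -- S x b, S a y; from hx get S x a
        have hxa : S x a := by
          by_contra hna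
          exact hx ⟨h1, hna⟩
        exact Quot.sound (S.trans hxa h2)
  haveI : Fintype (Quotient S') := Fintype.ofFinite _
  calc numParts S ≤ Nat.card (Option (Quotient S')) :=
        Nat.card_le_card_of_injective f hinj
    _ = numParts S' + 1 := Finite.card_option

lemma numParts_sup_pairS_lt [Finite α] (S : Setoid α) {a b : α} (h : ¬ S a b) :
    numParts (S ⊔ pairS a b) < numParts S := by
  classical
  set S' := S ⊔ pairS a b with hS'
  have hle : S ≤ S' := le_sup_left
  let f : Quotient S → Quotient S' :=
    Quotient.lift (fun x => Quotient.mk S' x) (fun x y hxy => Quot.sound (hle hxy))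
  have hsurj : Function.Surjective f := by
    intro q
    induction q using Quotient.ind with
    | _ x => exact ⟨Quotient.mk S x, rfl⟩
  have hninj : ¬ Function.Injective f := by
    intro hinj
    have h1 : f (Quotient.mk S a) = f (Quotient.mk S b) :=
      Quot.sound ((le_sup_right : pairS a b ≤ S') (pairS_rel a b))
    have h2 := hinj h1
    exact h (Quotient.exact h2)
  letI : Fintype (Quotient S) := Fintype.ofFinite _
  letI : Fintype (Quotient S') := Fintype.ofFinite _
  have := Fintype.card_lt_of_surjective_not_injective f hsurj hninj
  simpa [numParts, Nat.card_eq_fintype_card] using this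

lemma step_lemma [Finite α] (C T : Setoid α) (a b : α) :
    numParts (C ⊔ pairS a b) + numParts (C ⊔ T)
      ≤ numParts C + numParts ((C ⊔ pairS a b) ⊔ T) := by
  rw [sup_right_comm]
  by_cases h : C a b
  · rw [sup_eq_left.mpr (pairS_le h),
      sup_eq_left.mpr (pairS_le ((le_sup_left : C ≤ C ⊔ T) h))]
  · have h1 := numParts_sup_pairS_lt C h
    have h2 := numParts_le_sup_pairS_add_one (C ⊔ T) a b
    omega

lemma finset_sup_lemma [Finite α] (s : Finset (α × α)) (A T : Setoid α) :
    numParts (A ⊔ s.sup (fun p => pairS p.1 p.2)) + numParts (A ⊔ T)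
      ≤ numParts A + numParts ((A ⊔ s.sup (fun p => pairS p.1 p.2)) ⊔ T) := by
  classical
  induction s using Finset.induction with
  | empty => simp
  | @insert p s hp ih =>
    rw [Finset.sup_insert]
    have hC : A ⊔ (pairS p.1 p.2 ⊔ s.sup (fun p => pairS p.1 p.2))
        = (A ⊔ s.sup (fun p => pairS p.1 p.2)) ⊔ pairS p.1 p.2 := by
      rw [sup_comm (pairS p.1 p.2), ← sup_assoc]
    rw [hC]
    have hstep := step_lemma (A ⊔ s.sup (fun p => pairS p.1 p.2)) T p.1 p.2
    omega

lemma chain_lemma [Finite α] (A B T : Setoid α) (hAB : A ≤ B) :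
    numParts B + numParts (A ⊔ T) ≤ numParts A + numParts (B ⊔ T) := by
  classical
  letI : Fintype α := Fintype.ofFinite α
  set s : Finset (α × α) := Finset.univ.filter (fun p => B p.1 p.2) with hs
  have hB : A ⊔ s.sup (fun p => pairS p.1 p.2) = B := by
    apply le_antisymm
    · refine sup_le hAB (Finset.sup_le ?_)
      intro p hps
      rw [hs, Finset.mem_filter] at hps
      exact pairS_le hps.2
    · intro x y hxy
      have hmem : (x, y) ∈ s := by
        rw [hs, Finset.mem_filter]
        exact ⟨Finset.mem_univ _, hxy⟩
      have h1 : pairS x y ≤ s.sup (fun p => pairS p.1 p.2) :=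
        Finset.le_sup (f := fun p => pairS p.1 p.2) hmem
      exact (le_sup_right : _ ≤ A ⊔ s.sup (fun p => pairS p.1 p.2)) (h1 (pairS_rel x y))
  have := finset_sup_lemma s A T
  rw [hB] at this
  exact this

lemma numParts_submodular [Finite α] (S T : Setoid α) :
    numParts S + numParts T ≤ numParts (S ⊔ T) + numParts (S ⊓ T) := by
  have h := chain_lemma (S ⊓ T) S T inf_le_left
  rw [show (S ⊓ T) ⊔ T = T from sup_eq_right.mpr inf_le_right] at h
  omega

end Aux

/-- estimate (13), first part: for `Π₀, Π₁, Π ∈ Part₂(2k)` with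
`Π₀, Π₁` perfect matchings and `#(Π₀ ∨ Π₁ ∨ Π) = 1`, one has
`#(Π₀ ∨ Π) + #(Π₁ ∨ Π) ≤ 1 + #Π`.  Partitions of `{1,...,2k}` are encoded as
setoids on `Fin (2k)`; `⊔` is the join (finest common coarsening). -/
theorem stmt_1 (k : ℕ) (hk : 0 < k) (P₀ P₁ P : Setoid (Fin (2 * k)))
    (h₀ : IsPerfectMatching P₀) (h₁ : IsPerfectMatching P₁)
    (hP : AllPartsTwoLe P)
    (hjoin : numParts (P₀ ⊔ P₁ ⊔ P) = 1) :
    numParts (P₀ ⊔ P) + numParts (P₁ ⊔ P) ≤ 1 + numParts P := by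
  have hsub := numParts_submodular (P₀ ⊔ P) (P₁ ⊔ P)
  have h1 : (P₀ ⊔ P) ⊔ (P₁ ⊔ P) = P₀ ⊔ P₁ ⊔ P := by
    rw [sup_sup_sup_comm, sup_idem]
  have h2 : numParts ((P₀ ⊔ P) ⊓ (P₁ ⊔ P)) ≤ numParts P :=
    numParts_mono (le_inf le_sup_right le_sup_right)
  rw [h1, hjoin] at hsub
  omega
end

section
/- Let k be a positive integer and let Π₀, Π₁, Π ∈ Part₂(2k) with Π₀ and Π₁ perfect matchings and #(Π₀ ∨ Π₁ ∨ Π) = 1. Set r = #(Π₀ ∨ Π₁). If r > 1, then #(Π₀ ∨ Π) + #(Π₁ ∨ Π) ≤ k + 1 − ⌊r/2⌋. -/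
/-!
Work over `𝔽₂` and write `σᵢ = Πᵢ ∨ Π`, `ρ = Π₀ ∨ Π₁`. The map
`(u₀, u₁) ↦ u₀ - u₁ : 𝔽₂^{σ₀} × 𝔽₂^{σ₁} → 𝔽₂^{Π}` (functions pulled back to the blocks of `Π`)
has only the constants in its kernel, because `σ₀ ∨ σ₁` is the one-block partition. The
`ρ × Π` matrix `M` of the parities of `|j ∩ C|` annihilates its image, because every block of
`ρ` is a union of pairs of `Π₀` and also of pairs of `Π₁`. Hence `#σ₀ + #σ₁ + rank M ≤ #Π + 1`.

On the other hand, the blocks of `ρ` and of `Π` form a connected incidence structure. Explore it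
one block `C` of `Π` at a time: either `C` meets a new block of `ρ` an odd number of times, which
gives a new pivot of `M`, or it meets every new block at least twice. Counting gives
`r ≤ 2 rank M + ∑_C (|C| - 2) + 1 = 2 rank M + 2k - 2 #Π + 1`, and adding twice the first
inequality yields `2 (#σ₀ + #σ₁) + r ≤ 2k + 3`.
-/

open Module Finset Submodule

section Incidence

variable {κ ι : Type*} (f : κ → ι → ℕ)

def parityRow (C : κ) : ι → ZMod 2 := fun j => f C j

noncomputable def rowRank (S : Finset κ) : ℕ :=
  finrank (ZMod 2) (span (ZMod 2) (parityRow f '' S))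

variable [Fintype ι]

def rowSupport (C : κ) : Finset ι := {j | 0 < f C j}

@[simp] lemma mem_rowSupport {C : κ} {j : ι} : j ∈ rowSupport f C ↔ 0 < f C j := by
  simp [rowSupport]

def excess (C : κ) : ℕ := (∑ j, f C j) - 2

def IncidenceConnected : Prop :=
  ∀ J : Finset ι, J.Nonempty → J ≠ univ → ∃ C, ∃ j ∈ J, ∃ j' ∉ J, 0 < f C j ∧ 0 < f C j'

/-- The invariant of exploring the columns of `f` from a single column, one row at a time:
the rows `S` used so far are supported in the explored columns `J`. -/
def IsExplored (J : Finset ι) : Prop :=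
  ∃ S : Finset κ, (∀ C ∈ S, rowSupport f C ⊆ J) ∧
    #J ≤ 2 * rowRank f S + ∑ C ∈ S, excess f C + 1

variable {f}

lemma rowRank_mono {S S' : Finset κ} (h : S ⊆ S') : rowRank f S ≤ rowRank f S' :=
  finrank_mono (span_mono (Set.image_mono (coe_subset.mpr h)))

lemma rowRank_insert_of_odd [DecidableEq κ] {S : Finset κ} {C : κ} {j : ι}
    (hS : ∀ C' ∈ S, f C' j = 0) (hC : Odd (f C j)) :
    rowRank f (insert C S) = rowRank f S + 1 := by
  unfold rowRank
  rw [coe_insert, Set.image_insert_eq, span_insert, sup_comm]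
  refine finrank_sup_span_singleton fun hmem => ?_
  have hvanish : span (ZMod 2) (parityRow f '' S) ≤ LinearMap.ker (LinearMap.proj j) := by
    rw [span_le]
    rintro _ ⟨C', hC', rfl⟩
    simp [parityRow, hS C' hC']
  exact (ZMod.natCast_ne_zero_iff_odd.mpr hC) (hvanish hmem)

lemma IsExplored.union_rowSupport [DecidableEq ι] [DecidableEq κ] {J : Finset ι}
    (hJ : IsExplored f J) {C : κ} {j j' : ι} (hj : j ∈ J) (hj' : j' ∉ J) (hfj : 0 < f C j)
    (hfj' : 0 < f C j') : IsExplored f (rowSupport f C ∪ J) := by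
  obtain ⟨S, hSJ, hcard⟩ := hJ
  have hCS : C ∉ S := fun h => hj' (hSJ C h ((mem_rowSupport f).mpr hfj'))
  set D : Finset ι := rowSupport f C \ J with hDdef
  have hj'D : j' ∈ D := by simp [D, hfj', hj']
  have hD : ∑ x ∈ D, f C x + f C j ≤ ∑ x, f C x := by
    rw [add_comm, ← sum_insert (fun h => (mem_sdiff.mp h).2 hj)]
    exact sum_le_sum_of_subset (subset_univ _)
  have hD₁ : #D ≤ ∑ x ∈ D, f C x := by
    simpa using card_nsmul_le_sum D (f C) 1 fun x hx => (mem_rowSupport f).mp (mem_sdiff.mp hx).1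
  refine ⟨insert C S, fun C' hC' => ?_, ?_⟩
  · rcases mem_insert.mp hC' with rfl | hC'
    · exact subset_union_left
    · exact (hSJ C' hC').trans subset_union_right
  rw [← card_sdiff_add_card, ← hDdef, sum_insert hCS, excess]
  have hD_pos := card_pos.mpr ⟨j', hj'D⟩
  by_cases hodd : ∃ j₀ ∉ J, Odd (f C j₀)
  · -- an odd entry outside `J` is a pivot: the rows of `S` vanish there
    obtain ⟨j₀, hj₀J, hj₀⟩ := hodd
    have hS : ∀ C' ∈ S, f C' j₀ = 0 := fun C' hC' =>
      Nat.eq_zero_of_not_pos fun h => hj₀J (hSJ C' hC' ((mem_rowSupport f).mpr h))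
    rw [rowRank_insert_of_odd hS hj₀]
    omega
  · push Not at hodd
    have hD₂ : #D • 2 ≤ ∑ x ∈ D, f C x := by
      refine card_nsmul_le_sum _ _ _ fun x hx => ?_
      obtain ⟨hx, hxJ⟩ := mem_sdiff.mp hx
      have := (mem_rowSupport f).mp hx
      have := Nat.not_odd_iff_even.mp (hodd x hxJ)
      grind
    have := rowRank_mono (f := f) (subset_insert C S)
    rw [smul_eq_mul] at hD₂
    omega

theorem card_le_two_mul_rowRank_add [Fintype κ] [DecidableEq ι] [DecidableEq κ] [Nonempty ι]
    (hconn : IncidenceConnected f) :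
    Fintype.card ι ≤ 2 * rowRank f univ + ∑ C, excess f C + 1 := by
  obtain ⟨j₀⟩ := ‹Nonempty ι›
  have hgrow : ∀ J : Finset ι, #J ≤ Fintype.card ι → J.Nonempty → IsExplored f J →
      IsExplored f univ := by
    refine strongDownwardInduction fun J ih _ hJne hJ => ?_
    by_cases hJu : J = univ
    · exact hJu ▸ hJ
    obtain ⟨C, j, hj, j', hj', hfj, hfj'⟩ := hconn J hJne hJu
    refine ih (card_le_univ _) (ssubset_iff_of_subset subset_union_right |>.mpr
      ⟨j', mem_union_left _ (by simpa using hfj'), hj'⟩) (hJne.mono subset_union_right)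
      (hJ.union_rowSupport hj hj' hfj hfj')
  obtain ⟨S, -, hS⟩ := hgrow {j₀} (card_le_univ _) (singleton_nonempty j₀) ⟨∅, by simp, by simp⟩
  have := rowRank_mono (f := f) (subset_univ S)
  have := sum_le_sum_of_subset (f := excess f) (subset_univ S)
  rw [card_univ] at hS
  omega

end Incidence

lemma LinearMap.finrank_add_finrank_range_le_of_comp_eq_zero {K V W X : Type*} [Field K]
    [AddCommGroup V] [Module K V] [FiniteDimensional K V]
    [AddCommGroup W] [Module K W] [FiniteDimensional K W] [AddCommGroup X] [Module K X]
    {f : V →ₗ[K] W} {g : W →ₗ[K] X} (h : g ∘ₗ f = 0) :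
    finrank K V + finrank K (LinearMap.range g) ≤ finrank K W + finrank K (LinearMap.ker f) := by
  have hfg := finrank_mono (LinearMap.range_le_ker_iff.mpr h)
  have := f.finrank_range_add_finrank_ker
  have := g.finrank_range_add_finrank_ker
  omega

section Partitions

open scoped Classical

variable {α : Type*}

lemma eq_top_of_numParts_eq_one {S : Setoid α} (h : numParts S = 1) : S = ⊤ := by
  ext x y
  simpa using Quotient.exact ((Nat.card_eq_one_iff_unique.mp h).1.elim ⟦x⟧ ⟦y⟧)

lemma nonempty_of_numParts_eq_one {S : Setoid α} (h : numParts S = 1) : Nonempty α := by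
  obtain ⟨c⟩ := (Nat.card_eq_one_iff_unique.mp h).2
  exact ⟨c.out⟩

variable [Fintype α]

lemma numParts_eq_card (S : Setoid α) : numParts S = Fintype.card (Quotient S) :=
  Nat.card_eq_fintype_card

lemma partCard_eq_card (S : Setoid α) (x : α) :
    partCard S x = #{y | (⟦y⟧ : Quotient S) = ⟦x⟧} := by
  rw [partCard, Nat.card_eq_fintype_card, Fintype.card_subtype]
  congr 1
  ext y
  simp [Quotient.eq, S.comm']

lemma sum_mk_eq_zero_of_isPerfectMatching {R : Type*} [Ring R] [CharP R 2] {S T : Setoid α}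
    (hS : IsPerfectMatching S) (hST : S ≤ T) (G : Quotient S → R) (j : Quotient T) :
    ∑ x with (⟦x⟧ : Quotient T) = j, G ⟦x⟧ = 0 := by
  rw [sum_comp]
  refine sum_eq_zero fun c hc => ?_
  obtain ⟨x, hx, rfl⟩ := mem_image.mp hc
  have hclass : ∀ y, (⟦y⟧ : Quotient S) = ⟦x⟧ → (⟦y⟧ : Quotient T) = j := fun y hy =>
    (Quotient.sound (hST (Quotient.exact hy))).trans (mem_filter.mp hx).2
  rw [filter_filter, filter_congr fun y _ => and_iff_right_of_imp (hclass y), ← partCard_eq_card,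
    hS x, two_nsmul, CharTwo.add_self_eq_zero]

noncomputable def meetCard (P ρ : Setoid α) (C : Quotient P) (j : Quotient ρ) : ℕ :=
  #{x | (⟦x⟧ : Quotient ρ) = j ∧ (⟦x⟧ : Quotient P) = C}

variable {P ρ : Setoid α}

lemma meetCard_mk_mk_pos (x : α) : 0 < meetCard P ρ ⟦x⟧ ⟦x⟧ :=
  card_pos.mpr ⟨x, by simp⟩

lemma sum_meetCard (C : Quotient P) :
    ∑ j, meetCard P ρ C j = #{x | (⟦x⟧ : Quotient P) = C} := by
  rw [card_eq_sum_card_fiberwise (f := fun x => (⟦x⟧ : Quotient ρ)) fun _ _ => mem_univ _]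
  simp only [meetCard, filter_filter, and_comm]

lemma sum_meetCard_mul {R : Type*} [Semiring R] (g : Quotient P → R) (j : Quotient ρ) :
    ∑ C, (meetCard P ρ C j : R) * g C = ∑ x with (⟦x⟧ : Quotient ρ) = j, g ⟦x⟧ := by
  rw [← sum_fiberwise' _ (fun x => (⟦x⟧ : Quotient P))]
  simp only [sum_const, nsmul_eq_mul, meetCard, filter_filter]

lemma sum_excess_meetCard_add (hP : AllPartsTwoLe P) :
    ∑ C, excess (meetCard P ρ) C + 2 * numParts P = Fintype.card α := by
  have hw : ∀ C, 2 ≤ ∑ j, meetCard P ρ C j := Quotient.ind fun x => by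
    rw [sum_meetCard, ← partCard_eq_card]; exact hP x
  calc ∑ C, excess (meetCard P ρ) C + 2 * numParts P
      = ∑ C, (excess (meetCard P ρ) C + 2) := by
        rw [sum_add_distrib, sum_const, card_univ, numParts_eq_card, smul_eq_mul, mul_comm]
    _ = ∑ C : Quotient P, #{x | (⟦x⟧ : Quotient P) = C} :=
        sum_congr rfl fun C _ => by rw [excess, Nat.sub_add_cancel (hw C), sum_meetCard]
    _ = Fintype.card α := by
        rw [← card_univ, card_eq_sum_card_fiberwise (f := fun x => (⟦x⟧ : Quotient P))
          fun _ _ => mem_univ _]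

lemma incidenceConnected_meetCard (h : ρ ⊔ P = ⊤) : IncidenceConnected (meetCard P ρ) := by
  intro J ⟨j, hj⟩ hJ
  by_contra! hno
  have hmove : ∀ x y, P x y → (⟦x⟧ : Quotient ρ) ∈ J → (⟦y⟧ : Quotient ρ) ∈ J :=
    fun x y hxy hx => by_contra fun hy => by
      have := hno ⟦x⟧ _ hx _ hy (meetCard_mk_mk_pos x)
      rw [Quotient.sound hxy] at this
      exact (meetCard_mk_mk_pos y).ne' (Nat.le_zero.mp this)
  have hker : ρ ⊔ P ≤ Setoid.ker fun x => (⟦x⟧ : Quotient ρ) ∈ J :=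
    sup_le (fun x y hxy => by simp [Setoid.ker_def, Quotient.sound hxy])
      fun x y hxy => propext ⟨hmove x y hxy, hmove y x (P.symm hxy)⟩
  obtain ⟨j', hj'⟩ : ∃ j', j' ∉ J := by
    by_contra! hall
    exact hJ (eq_univ_iff_forall.mpr hall)
  induction j using Quotient.ind
  induction j' using Quotient.ind
  rename_i x y
  exact hj' ((Setoid.ker_def.mp (hker (h ▸ trivial : (ρ ⊔ P) x y))).mp hj)

end Partitions

section Pullback

variable {α : Type*} {P σ₀ σ₁ : Setoid α} (K : Type*)

def pullbackDiff [CommRing K] (h₀ : P ≤ σ₀) (h₁ : P ≤ σ₁) :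
    ((Quotient σ₀ → K) × (Quotient σ₁ → K)) →ₗ[K] (Quotient P → K) :=
  (LinearMap.funLeft K K (Setoid.map_of_le h₀)).coprod
    (-LinearMap.funLeft K K (Setoid.map_of_le h₁))

variable {K}

@[simp] lemma pullbackDiff_apply_mk [CommRing K] (h₀ : P ≤ σ₀) (h₁ : P ≤ σ₁)
    (u : (Quotient σ₀ → K) × (Quotient σ₁ → K)) (x : α) :
    pullbackDiff K h₀ h₁ u ⟦x⟧ = u.1 ⟦x⟧ - u.2 ⟦x⟧ := by
  simp [pullbackDiff, sub_eq_add_neg, Setoid.map_of_le]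

lemma finrank_ker_pullbackDiff_le [Field K] [Nonempty α] (h₀ : P ≤ σ₀) (h₁ : P ≤ σ₁)
    (h : σ₀ ⊔ σ₁ = ⊤) : finrank K (LinearMap.ker (pullbackDiff K h₀ h₁)) ≤ 1 := by
  refine (finrank_mono (show _ ≤ K ∙ ((1, 1) : (Quotient σ₀ → K) × (Quotient σ₁ → K)) from
    fun u hu => ?_)).trans ?_
  · have hu' : ∀ x : α, u.1 ⟦x⟧ = u.2 ⟦x⟧ := fun x =>
      sub_eq_zero.mp ((pullbackDiff_apply_mk h₀ h₁ u x).symm.trans (congrFun hu ⟦x⟧))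
    have hker : σ₀ ⊔ σ₁ ≤ Setoid.ker fun x => u.1 ⟦x⟧ :=
      sup_le (fun x y hxy => congrArg u.1 (Quotient.sound hxy))
        fun x y hxy => by simp only [Setoid.ker_def, hu', Quotient.sound hxy]
    obtain ⟨x₀⟩ := ‹Nonempty α›
    have hconst : ∀ x, u.1 ⟦x⟧ = u.1 ⟦x₀⟧ := fun x => hker (h ▸ trivial)
    refine mem_span_singleton.mpr ⟨u.1 ⟦x₀⟧, Prod.ext (funext ?_) (funext ?_)⟩ <;>
      refine Quotient.ind fun x => ?_ <;> simp [hconst, ← hu']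
  · simpa using finrank_span_le_card ({(1, 1)} : Set ((Quotient σ₀ → K) × (Quotient σ₁ → K)))

end Pullback

section Estimate

open scoped Classical

variable {α : Type*} [Fintype α] {P₀ P₁ P : Setoid α}

lemma numParts_sup_add_numParts_sup_add_rowRank_le [Nonempty α] (h₀ : IsPerfectMatching P₀)
    (h₁ : IsPerfectMatching P₁) (htop : P₀ ⊔ P₁ ⊔ P = ⊤) :
    numParts (P₀ ⊔ P) + numParts (P₁ ⊔ P) + rowRank (meetCard P (P₀ ⊔ P₁)) univ
      ≤ numParts P + 1 := by
  set M : Matrix (Quotient (P₀ ⊔ P₁)) (Quotient P) (ZMod 2) :=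
    .of fun j C => meetCard P (P₀ ⊔ P₁) C j
  have hrank :
      rowRank (meetCard P (P₀ ⊔ P₁)) univ = finrank (ZMod 2) (LinearMap.range M.mulVecLin) := by
    rw [Matrix.range_mulVecLin, rowRank, coe_univ, Set.image_univ]
    rfl
  set T := pullbackDiff (ZMod 2) (le_sup_right : P ≤ P₀ ⊔ P) (le_sup_right : P ≤ P₁ ⊔ P)
  have hMT : M.mulVecLin ∘ₗ T = 0 := by
    refine LinearMap.ext fun u => funext fun j => ?_
    change ∑ C, (meetCard P (P₀ ⊔ P₁) C j : ZMod 2) * T u C = 0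
    rw [sum_meetCard_mul]
    have hsum₀ : ∑ x with (⟦x⟧ : Quotient (P₀ ⊔ P₁)) = j, u.1 ⟦x⟧ = 0 :=
      sum_mk_eq_zero_of_isPerfectMatching h₀ le_sup_left (u.1 ∘ Setoid.map_of_le le_sup_left) j
    have hsum₁ : ∑ x with (⟦x⟧ : Quotient (P₀ ⊔ P₁)) = j, u.2 ⟦x⟧ = 0 :=
      sum_mk_eq_zero_of_isPerfectMatching h₁ le_sup_right (u.2 ∘ Setoid.map_of_le le_sup_left) j
    simp only [T, pullbackDiff_apply_mk, sum_sub_distrib, hsum₀, hsum₁, sub_zero]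
  have hjoin : (P₀ ⊔ P) ⊔ (P₁ ⊔ P) = ⊤ := by rwa [sup_sup_sup_comm, sup_idem]
  have hdim := LinearMap.finrank_add_finrank_range_le_of_comp_eq_zero hMT
  have hker : finrank (ZMod 2) (LinearMap.ker T) ≤ 1 := finrank_ker_pullbackDiff_le _ _ hjoin
  rw [finrank_prod, finrank_pi, finrank_pi, finrank_pi] at hdim
  simp only [numParts_eq_card, hrank]
  omega

lemma numParts_add_two_mul_numParts_le [Nonempty α] {ρ : Setoid α} (hP : AllPartsTwoLe P)
    (h : ρ ⊔ P = ⊤) :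
    numParts ρ + 2 * numParts P ≤ 2 * rowRank (meetCard P ρ) univ + Fintype.card α + 1 := by
  have : Nonempty (Quotient ρ) := ⟨⟦Classical.arbitrary α⟧⟩
  have := card_le_two_mul_rowRank_add (incidenceConnected_meetCard h)
  have := sum_excess_meetCard_add (ρ := ρ) hP
  rw [numParts_eq_card]
  omega

end Estimate

theorem stmt_3_general (k : ℕ) (P₀ P₁ P : Setoid (Fin (2 * k)))
    (h₀ : IsPerfectMatching P₀) (h₁ : IsPerfectMatching P₁)
    (hP : AllPartsTwoLe P)
    (hjoin : numParts (P₀ ⊔ P₁ ⊔ P) = 1)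
    (r : ℕ) (hr : r = numParts (P₀ ⊔ P₁)) :
    numParts (P₀ ⊔ P) + numParts (P₁ ⊔ P) + r / 2 ≤ k + 1 := by
  have := nonempty_of_numParts_eq_one hjoin
  have htop := eq_top_of_numParts_eq_one hjoin
  have hlin := numParts_sup_add_numParts_sup_add_rowRank_le h₀ h₁ htop
  have hcomb := numParts_add_two_mul_numParts_le hP htop
  rw [Fintype.card_fin] at hcomb
  omega

/-- estimate (14): for `Π₀, Π₁, Π ∈ Part₂(2k)` with `Π₀, Π₁`
perfect matchings, `#(Π₀ ∨ Π₁ ∨ Π) = 1` and `r = #(Π₀ ∨ Π₁) > 1`, one has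
`#(Π₀ ∨ Π) + #(Π₁ ∨ Π) ≤ k + 1 − ⌊r/2⌋` (stated additively in `ℕ`). -/
theorem stmt_3 (k : ℕ) (hk : 0 < k) (P₀ P₁ P : Setoid (Fin (2 * k)))
    (h₀ : IsPerfectMatching P₀) (h₁ : IsPerfectMatching P₁)
    (hP : AllPartsTwoLe P)
    (hjoin : numParts (P₀ ⊔ P₁ ⊔ P) = 1)
    (r : ℕ) (hr : r = numParts (P₀ ⊔ P₁)) (hr1 : 1 < r) :
    numParts (P₀ ⊔ P) + numParts (P₁ ⊔ P) + r / 2 ≤ k + 1 :=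
  stmt_3_general k P₀ P₁ P h₀ h₁ hP hjoin r hr
end

section
/- Let G = (V, E) be a finite graph with vertex set V = V₀ ∪ V₁ (disjoint union), constructed from surjections φ₀: {1,...,2k} → V₀ and φ₁: {1,...,2k} → V₁ whose level-set partitions are Π₀ ∨ Π and Π₁ ∨ Π respectively, with edge set E = {{φ₀(i), φ₁(i)} : i = 1,...,2k}. If #(Π₀ ∨ Π₁ ∨ Π) = 1, then G is connected. -/
theorem numParts_eq_one_iff {α : Type*} {S : Setoid α} : numParts S = 1 ↔ S = ⊤ ∧ Nonempty α := by
  rw [numParts, Nat.card_eq_one_iff_unique, Quotient.subsingleton_iff, nonempty_quotient_iff]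

open Function Sum in
theorem SimpleGraph.connected_of_ker_sup_ker_eq_top {ι V₀ V₁ : Type*} [Nonempty ι]
    (G : SimpleGraph (V₀ ⊕ V₁)) {φ₀ : ι → V₀} {φ₁ : ι → V₁}
    (hs₀ : Surjective φ₀) (hs₁ : Surjective φ₁) (hadj : ∀ i, G.Adj (inl (φ₀ i)) (inr (φ₁ i)))
    (htop : Setoid.ker φ₀ ⊔ Setoid.ker φ₁ = ⊤) :
    G.Connected := by
  let S := Setoid.comap (fun i ↦ inl (φ₀ i)) G.reachableSetoid
  have hker₀ : Setoid.ker φ₀ ≤ S := fun i j h ↦ by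
    rw [Setoid.comap_rel, Setoid.ker_def.1 h]
  have hker₁ : Setoid.ker φ₁ ≤ S := fun i j h ↦
    (hadj i).reachable.trans (Setoid.ker_def.1 h ▸ (hadj j).symm.reachable)
  have hreach (i j : ι) : G.Reachable (inl (φ₀ i)) (inl (φ₀ j)) :=
    sup_le hker₀ hker₁ (Setoid.eq_top_iff.1 htop i j)
  obtain ⟨i₀⟩ := ‹Nonempty ι›
  refine G.connected_iff_exists_forall_reachable.2 ⟨inl (φ₀ i₀), ?_⟩
  rintro (v | v)
  · obtain ⟨i, rfl⟩ := hs₀ v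
    exact hreach i₀ i
  · obtain ⟨i, rfl⟩ := hs₁ v
    exact (hreach i₀ i).trans (hadj i).reachable

theorem stmt_5_general (k : ℕ) (P₀ P₁ P : Setoid (Fin (2 * k)))
    {V₀ V₁ : Type*} (φ₀ : Fin (2 * k) → V₀) (φ₁ : Fin (2 * k) → V₁)
    (hs₀ : Function.Surjective φ₀) (hs₁ : Function.Surjective φ₁)
    (hlevel₀ : ∀ i j, φ₀ i = φ₀ j ↔ (P₀ ⊔ P).r i j)
    (hlevel₁ : ∀ i j, φ₁ i = φ₁ j ↔ (P₁ ⊔ P).r i j)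
    (G : SimpleGraph (V₀ ⊕ V₁))
    (hAdj : ∀ a b, G.Adj a b ↔ ∃ i : Fin (2 * k),
      (a = Sum.inl (φ₀ i) ∧ b = Sum.inr (φ₁ i)) ∨
      (b = Sum.inl (φ₀ i) ∧ a = Sum.inr (φ₁ i)))
    (hjoin : numParts (P₀ ⊔ P₁ ⊔ P) = 1) :
    G.Connected := by
  obtain ⟨htop, hne⟩ := numParts_eq_one_iff.1 hjoin
  have hker₀ : Setoid.ker φ₀ = P₀ ⊔ P := Setoid.ext fun i j ↦ Setoid.ker_def.trans (hlevel₀ i j)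
  have hker₁ : Setoid.ker φ₁ = P₁ ⊔ P := Setoid.ext fun i j ↦ Setoid.ker_def.trans (hlevel₁ i j)
  refine G.connected_of_ker_sup_ker_eq_top hs₀ hs₁ (fun i ↦ (hAdj _ _).2 ⟨i, .inl ⟨rfl, rfl⟩⟩) ?_
  rw [hker₀, hker₁, ← sup_sup_distrib_right, htop]

/-- Lemma 3.3: let `Π₀, Π₁, Π` be partitions of `{1,...,2k}`
(encoded as setoids on `Fin (2k)`), let `φ₀ : {1,...,2k} → V₀` and
`φ₁ : {1,...,2k} → V₁` be surjections whose level-set partitions are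
`Π₀ ∨ Π` and `Π₁ ∨ Π` respectively (`V₀`, `V₁` disjoint, encoded via a sum
type), and let `G` be the graph on `V₀ ⊔ V₁` with edges
`{φ₀(i), φ₁(i)}`, `i = 1,...,2k`.  If `#(Π₀ ∨ Π₁ ∨ Π) = 1` then `G` is
connected. -/
theorem stmt_5 (k : ℕ) (hk : 0 < k) (P₀ P₁ P : Setoid (Fin (2 * k)))
    {V₀ V₁ : Type*} (φ₀ : Fin (2 * k) → V₀) (φ₁ : Fin (2 * k) → V₁)
    (hs₀ : Function.Surjective φ₀) (hs₁ : Function.Surjective φ₁)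
    (hlevel₀ : ∀ i j, φ₀ i = φ₀ j ↔ (P₀ ⊔ P).r i j)
    (hlevel₁ : ∀ i j, φ₁ i = φ₁ j ↔ (P₁ ⊔ P).r i j)
    (G : SimpleGraph (V₀ ⊕ V₁))
    (hAdj : ∀ a b, G.Adj a b ↔ ∃ i : Fin (2 * k),
      (a = Sum.inl (φ₀ i) ∧ b = Sum.inr (φ₁ i)) ∨
      (b = Sum.inl (φ₀ i) ∧ a = Sum.inr (φ₁ i)))
    (hjoin : numParts (P₀ ⊔ P₁ ⊔ P) = 1) :
    G.Connected :=
  stmt_5_general k P₀ P₁ P φ₀ φ₁ hs₀ hs₁ hlevel₀ hlevel₁ G hAdj hjoin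
end
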